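/- arXiv:2605.07922 — 2 statements merged into one kernel-verified Lean document; each statement's English description precedes it below -/
import Mathlib

section
/- Let m and s be positive natural numbers, C_1, …, C_m positive real numbers, and let τ* > 0 be the s-th largest element of the multiset { C_p / k : p ∈ {1,…,m}, k ≥ 1 }, i.e. the number of pairs (p,k) with k ≥ 1 and C_p / k ≥ τ* is at least s and the number with C_p / k > τ* is strictly less than s. Then ∑_{p=1}^{m} ⌊C_p / τ*⌋ ≥ s, and τ* = sup { τ > 0 : ∑_{p=1}^{m} ⌊C_p / τ⌋ ≥ s }. -/
lemma mem_iff_aux {m : ℕ} (C : Fin m → ℝ) (hC : ∀ p, 0 < C p) (τ : ℝ) (hτ : 0 < τ)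
    (p : Fin m) (k : ℕ) :
    (0 < k ∧ τ ≤ C p / (k : ℝ)) ↔ (1 ≤ k ∧ k ≤ (⌊C p / τ⌋).toNat) := by
  constructor
  · rintro ⟨hk, hle⟩
    have hk' : (0:ℝ) < k := by exact_mod_cast hk
    have hkc : τ * k ≤ C p := (le_div_iff₀ hk').mp hle
    have h1 : (k:ℝ) ≤ C p / τ := by rw [le_div_iff₀ hτ]; nlinarith
    have h2 : (k:ℤ) ≤ ⌊C p / τ⌋ := Int.le_floor.mpr (by exact_mod_cast h1)
    exact ⟨hk, by omega⟩
  · rintro ⟨h1, h2⟩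
    have hk : 0 < k := h1
    have hk' : (0:ℝ) < k := by exact_mod_cast hk
    have h3 : (k:ℤ) ≤ ⌊C p / τ⌋ := by omega
    have h4 : (k:ℝ) ≤ C p / τ := le_trans (by exact_mod_cast h3) (Int.floor_le _)
    refine ⟨hk, ?_⟩
    rw [le_div_iff₀ hk']
    rw [le_div_iff₀ hτ] at h4
    nlinarith

lemma ncard_aux {m : ℕ} (C : Fin m → ℝ) (hC : ∀ p, 0 < C p) (τ : ℝ) (hτ : 0 < τ) :
    {pk : Fin m × ℕ | 0 < pk.2 ∧ τ ≤ C pk.1 / (pk.2 : ℝ)}.ncard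
      = ∑ p, (⌊C p / τ⌋).toNat ∧
    {pk : Fin m × ℕ | 0 < pk.2 ∧ τ ≤ C pk.1 / (pk.2 : ℝ)}.Finite := by
  set n : Fin m → ℕ := fun p => (⌊C p / τ⌋).toNat with hn
  set F : Finset (Fin m × ℕ) :=
    Finset.univ.biUnion (fun p => (Finset.Icc 1 (n p)).image (fun k => (p, k))) with hF
  have hset : {pk : Fin m × ℕ | 0 < pk.2 ∧ τ ≤ C pk.1 / (pk.2 : ℝ)} = ↑F := by
    ext ⟨p, k⟩
    rw [Set.mem_setOf_eq, Finset.mem_coe, mem_iff_aux C hC τ hτ p k]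
    constructor
    · rintro ⟨h1, h2⟩
      exact Finset.mem_biUnion.mpr ⟨p, Finset.mem_univ p,
        Finset.mem_image.mpr ⟨k, Finset.mem_Icc.mpr ⟨h1, h2⟩, rfl⟩⟩
    · intro hmem
      obtain ⟨p', -, hmem⟩ := Finset.mem_biUnion.mp hmem
      obtain ⟨k', hk', heq⟩ := Finset.mem_image.mp hmem
      obtain ⟨rfl, rfl⟩ := Prod.mk.injEq .. ▸ heq
      exact Finset.mem_Icc.mp hk'
  rw [hset]
  refine ⟨?_, F.finite_toSet⟩
  rw [Set.ncard_coe_finset]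
  rw [Finset.card_biUnion]
  · refine Finset.sum_congr rfl (fun p _ => ?_)
    rw [Finset.card_image_of_injective _ (fun a b h => by simpa using h)]
    simp
  · intro x _ y _ hxy
    simp only [Finset.disjoint_left, Finset.mem_image]
    rintro a ⟨k, _, rfl⟩ ⟨k', _, h⟩
    exact hxy ((Prod.mk.injEq .. ▸ h).1.symm)

/-- If `τ* > 0` is the `s`-th largest element of the multiset
`{C p / k : p ∈ Fin m, k ≥ 1}` (at least `s` pairs have payoff `≥ τ*`, fewer than `s`
have payoff `> τ*`), then `∑ p, ⌊C p / τ*⌋ ≥ s` and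
`τ* = sup {τ > 0 : ∑ p, ⌊C p / τ⌋ ≥ s}`. -/
theorem sth_largest_eq_sup (m s : ℕ) (hm : 0 < m) (hs : 0 < s)
    (C : Fin m → ℝ) (hC : ∀ p, 0 < C p) (τstar : ℝ) (hτ : 0 < τstar)
    (hge : s ≤ {pk : Fin m × ℕ | 0 < pk.2 ∧ τstar ≤ C pk.1 / (pk.2 : ℝ)}.ncard)
    (hgt : {pk : Fin m × ℕ | 0 < pk.2 ∧ τstar < C pk.1 / (pk.2 : ℝ)}.ncard < s) :
    (s : ℤ) ≤ (∑ p, ⌊C p / τstar⌋) ∧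
      τstar = sSup {τ : ℝ | 0 < τ ∧ (s : ℤ) ≤ ∑ p, ⌊C p / τ⌋} := by

  have key : ∀ τ : ℝ, 0 < τ → ((s : ℤ) ≤ ∑ p, ⌊C p / τ⌋ ↔
      s ≤ {pk : Fin m × ℕ | 0 < pk.2 ∧ τ ≤ C pk.1 / (pk.2 : ℝ)}.ncard) := by
    intro τ hτ'
    rw [(ncard_aux C hC τ hτ').1]
    have : ∑ p, ⌊C p / τ⌋ = ∑ p, ((⌊C p / τ⌋).toNat : ℤ) := by
      refine Finset.sum_congr rfl (fun p _ => ?_)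
      rw [Int.toNat_of_nonneg (Int.floor_nonneg.mpr (le_of_lt (div_pos (hC p) hτ')))]
    rw [this, ← Nat.cast_sum]
    exact_mod_cast Iff.rfl
  have h1 : (s : ℤ) ≤ ∑ p, ⌊C p / τstar⌋ := (key τstar hτ).mpr hge
  refine ⟨h1, ?_⟩
  have hmem : τstar ∈ {τ : ℝ | 0 < τ ∧ (s : ℤ) ≤ ∑ p, ⌊C p / τ⌋} := ⟨hτ, h1⟩
  have hub : ∀ τ ∈ {τ : ℝ | 0 < τ ∧ (s : ℤ) ≤ ∑ p, ⌊C p / τ⌋}, τ ≤ τstar := by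
    rintro τ ⟨hτ', hsle⟩
    by_contra hlt
    push_neg at hlt
    have hsub : {pk : Fin m × ℕ | 0 < pk.2 ∧ τ ≤ C pk.1 / (pk.2 : ℝ)}
        ⊆ {pk : Fin m × ℕ | 0 < pk.2 ∧ τstar < C pk.1 / (pk.2 : ℝ)} := by
      rintro ⟨p, k⟩ ⟨hk, hle⟩
      exact ⟨hk, lt_of_lt_of_le hlt hle⟩
    have hfin : {pk : Fin m × ℕ | 0 < pk.2 ∧ τstar < C pk.1 / (pk.2 : ℝ)}.Finite := by
      refine Set.Finite.subset (ncard_aux C hC τstar hτ).2 ?_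
      rintro ⟨p, k⟩ ⟨hk, hle⟩
      exact ⟨hk, le_of_lt hle⟩
    have := Set.ncard_le_ncard hsub hfin
    have hs' := (key τ hτ').mp hsle
    omega
  exact le_antisymm (le_csSup ⟨τstar, hub⟩ hmem) (csSup_le ⟨τstar, hmem⟩ hub)
end

section
/- Let m and s be positive natural numbers, C_1, …, C_m positive real numbers, and let τ* > 0 be the s-th largest element of the multiset { C_p / k : p ∈ {1,…,m}, k ≥ 1 } (the number of pairs (p,k) with C_p / k ≥ τ* is at least s and the number with C_p / k > τ* is strictly less than s). Then: (i) there exists an allocation (k_1, …, k_m) of nonnegative integers with k_1 + … + k_m = s and C_p / k_p ≥ τ* for every p with k_p > 0; and (ii) for every allocation (k_1, …, k_m) of nonnegative integers with k_1 + … + k_m = s, there exists some p with k_p > 0 and C_p / k_p ≤ τ*. Consequently τ* is the maximum over all allocations of the minimum payoff min_{p : k_p > 0} C_p / k_p. -/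
/-- The finset of pairs `(p, j)` with `1 ≤ j ≤ N p`. -/
def pairFinset {m : ℕ} (N : Fin m → ℕ) : Finset (Fin m × ℕ) :=
  Finset.univ.biUnion (fun p : Fin m => (Finset.Icc 1 (N p)).image fun j => (p, j))

lemma mem_pairFinset {m : ℕ} (N : Fin m → ℕ) (pk : Fin m × ℕ) :
    pk ∈ pairFinset N ↔ 1 ≤ pk.2 ∧ pk.2 ≤ N pk.1 := by
  obtain ⟨p, j⟩ := pk
  simp only [pairFinset, Finset.mem_biUnion, Finset.mem_univ, true_and, Finset.mem_image,
    Finset.mem_Icc, Prod.mk.injEq]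
  constructor
  · rintro ⟨q, k, ⟨h1, h2⟩, rfl, rfl⟩; exact ⟨h1, h2⟩
  · rintro ⟨h1, h2⟩; exact ⟨p, j, ⟨h1, h2⟩, rfl, rfl⟩

lemma card_pairFinset {m : ℕ} (N : Fin m → ℕ) :
    (pairFinset N).card = ∑ p, N p := by
  rw [pairFinset, Finset.card_biUnion]
  · refine Finset.sum_congr rfl fun p _ => ?_
    have hinj : Function.Injective (fun j : ℕ => (p, j)) := by
      intro a b h; exact (Prod.mk.injEq _ _ _ _ ▸ h).2
    rw [Finset.card_image_of_injective _ hinj, Nat.card_Icc]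
    omega
  · intro p _ q _ hpq
    simp only [Finset.disjoint_left, Finset.mem_image, Finset.mem_Icc]
    rintro ⟨a, b⟩ ⟨j, _, hj⟩ ⟨j', _, hj'⟩
    apply hpq
    have h1 : p = a := congrArg Prod.fst hj
    have h2 : q = a := congrArg Prod.fst hj'
    rw [h1, h2]

lemma exists_alloc {m : ℕ} (N : Fin m → ℕ) (s : ℕ) (h : s ≤ ∑ p, N p) :
    ∃ k : Fin m → ℕ, (∀ p, k p ≤ N p) ∧ (∑ p, k p) = s := by
  induction s with
  | zero => exact ⟨0, fun p => Nat.zero_le _, by simp⟩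
  | succ n ih =>
    obtain ⟨k, hk, hsum⟩ := ih (le_of_lt (Nat.lt_of_succ_le h))
    have hex : ∃ p, k p < N p := by
      by_contra hc; push_neg at hc
      have : ∑ p, N p ≤ ∑ p, k p := Finset.sum_le_sum (fun p _ => hc p)
      omega
    obtain ⟨p, hp⟩ := hex
    refine ⟨Function.update k p (k p + 1), ?_, ?_⟩
    · intro q
      rcases eq_or_ne q p with rfl | hne
      · simpa using hp
      · simpa [Function.update_of_ne hne] using hk q
    · rw [Finset.sum_update_of_mem (Finset.mem_univ p)]
      have := Finset.sum_eq_sum_sdiff_singleton_add (Finset.mem_univ p) k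
      omega

/-- If `τ* > 0` is the `s`-th largest element of the multiset
`{C p / k : p ∈ Fin m, k ≥ 1}`, then (i) some allocation of total `s` has every
positive payoff at least `τ*`, and (ii) every allocation of total `s` has some
positive payoff at most `τ*`; so `τ*` is the optimal (max-min) payoff. -/
theorem sth_largest_is_optimal_payoff (m s : ℕ) (hm : 0 < m) (hs : 0 < s)
    (C : Fin m → ℝ) (hC : ∀ p, 0 < C p) (τstar : ℝ) (hτ : 0 < τstar)
    (hge : s ≤ {pk : Fin m × ℕ | 0 < pk.2 ∧ τstar ≤ C pk.1 / (pk.2 : ℝ)}.ncard)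
    (hgt : {pk : Fin m × ℕ | 0 < pk.2 ∧ τstar < C pk.1 / (pk.2 : ℝ)}.ncard < s) :
    (∃ k : Fin m → ℕ, (∑ p, k p) = s ∧ ∀ p, 0 < k p → τstar ≤ C p / (k p : ℝ)) ∧
      (∀ k : Fin m → ℕ, (∑ p, k p) = s → ∃ p, 0 < k p ∧ C p / (k p : ℝ) ≤ τstar) := by
  set N : Fin m → ℕ := fun p => ⌊C p / τstar⌋₊ with hN
  -- key characterization
  have key : ∀ (p : Fin m) (j : ℕ), 0 < j → (τstar ≤ C p / (j : ℝ) ↔ j ≤ N p) := by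
    intro p j hj
    have hj' : (0 : ℝ) < (j : ℝ) := by exact_mod_cast hj
    rw [le_div_iff₀ hj', hN, Nat.le_floor_iff (le_of_lt (div_pos (hC p) hτ)),
      le_div_iff₀ hτ, mul_comm]
  have hSeq : {pk : Fin m × ℕ | 0 < pk.2 ∧ τstar ≤ C pk.1 / (pk.2 : ℝ)}
      = ↑(pairFinset N) := by
    ext ⟨p, j⟩
    simp only [Set.mem_setOf_eq, Finset.coe_sort_coe, Finset.mem_coe, mem_pairFinset]
    constructor
    · rintro ⟨hj, hle⟩; exact ⟨hj, (key p j hj).mp hle⟩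
    · rintro ⟨hj, hle⟩; exact ⟨hj, (key p j hj).mpr hle⟩
  rw [hSeq, Set.ncard_coe_finset, card_pairFinset] at hge
  constructor
  · obtain ⟨k, hk, hsum⟩ := exists_alloc N s hge
    exact ⟨k, hsum, fun p hp => (key p (k p) hp).mpr (hk p)⟩
  · intro k hsum
    by_contra hc
    push_neg at hc
    -- every positive payoff is > τstar; build s pairs in the strict set
    have hsub : (↑(pairFinset k) : Set (Fin m × ℕ))
        ⊆ {pk : Fin m × ℕ | 0 < pk.2 ∧ τstar < C pk.1 / (pk.2 : ℝ)} := by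
      rintro ⟨p, j⟩ hmem
      rw [Finset.mem_coe, mem_pairFinset] at hmem
      obtain ⟨h1, h2⟩ := hmem
      have hkp : 0 < k p := lt_of_lt_of_le h1 h2
      have hlt : τstar < C p / (k p : ℝ) := hc p hkp
      have hjpos : (0 : ℝ) < (j : ℝ) := by exact_mod_cast h1
      have hmono : C p / (k p : ℝ) ≤ C p / (j : ℝ) := by
        apply div_le_div_of_nonneg_left (le_of_lt (hC p)) hjpos
        exact_mod_cast h2
      exact ⟨h1, lt_of_lt_of_le hlt hmono⟩
    have hfin : {pk : Fin m × ℕ | 0 < pk.2 ∧ τstar < C pk.1 / (pk.2 : ℝ)}.Finite := by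
      apply Set.Finite.subset (pairFinset N).finite_toSet
      rw [← hSeq]
      rintro ⟨p, j⟩ ⟨h1, h2⟩
      exact ⟨h1, le_of_lt h2⟩
    have := Set.ncard_le_ncard hsub hfin
    rw [Set.ncard_coe_finset, card_pairFinset, hsum] at this
    omega
end
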